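/- Vanishing of Pfaffian polynomials in low dimensions: if dim T = m < 2n for some n ≥ 1, then pf_n(R) = 0 for every algebraic curvature tensor R on T and every orthonormal basis E₁, …, E_m of T used in the definition of pf_n. -/

import Mathlib

open scoped BigOperators

variable {T : Type*} [NormedAddCommGroup T] [InnerProductSpace ℝ T] [FiniteDimensional ℝ T]

/-- A map `T → T → T → T → ℝ` that is linear in each of its four arguments. -/
def IsQuadrilinear (R : T → T → T → T → ℝ) : Prop :=
  (∀ Y U V, IsLinearMap ℝ fun X => R X Y U V) ∧
  (∀ X U V, IsLinearMap ℝ fun Y => R X Y U V) ∧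
  (∀ X Y V, IsLinearMap ℝ fun U => R X Y U V) ∧
  (∀ X Y U, IsLinearMap ℝ fun V => R X Y U V)

/-- An algebraic curvature tensor on `T`. -/
def IsAlgCurv (R : T → T → T → T → ℝ) : Prop :=
  IsQuadrilinear R ∧
  (∀ X Y U V : T, R X Y U V = -R Y X U V) ∧
  (∀ X Y U V : T, R X Y U V = -R X Y V U) ∧
  (∀ X Y Z V : T, R X Y Z V + R Y Z X V + R Z X Y V = 0)

/-- `(Φ⁺R)(X,Y;U,V) := −2·(R(X,U;Y,V) + R(X,V;Y,U))`. -/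
noncomputable def PhiPlus (R : T → T → T → T → ℝ) : T → T → T → T → ℝ :=
  fun X Y U V => -2 * (R X U Y V + R X V Y U)

/-- The Pfaffian polynomial of degree `n`, evaluated on `R` with respect to the
orthonormal basis `E`; for `n = 0` it equals `1`. -/
noncomputable def pf {m : ℕ} (E : OrthonormalBasis (Fin m) ℝ T)
    (R : T → T → T → T → ℝ) (n : ℕ) : ℝ :=
  (1 / ((12 : ℝ) ^ n * (n.factorial : ℝ))) *
    ∑ σ : Equiv.Perm (Fin (2 * n)), ((Equiv.Perm.sign σ : ℤ) : ℝ) *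
      ∑ μ : Fin (2 * n) → Fin m, ∏ r : Fin n,
        PhiPlus R
          (E (μ ⟨2 * r.1, by have := r.isLt; omega⟩))
          (E (μ (σ ⟨2 * r.1, by have := r.isLt; omega⟩)))
          (E (μ ⟨2 * r.1 + 1, by have := r.isLt; omega⟩))
          (E (μ (σ ⟨2 * r.1 + 1, by have := r.isLt; omega⟩)))

open Equiv in
theorem Equiv.Perm.sum_sign_smul_comp_eq_zero_of_not_injective {ι α M : Type*} [Fintype ι]
    [DecidableEq ι] [AddCommGroup M] (g : (ι → α) → M) {v : ι → α}
    (hv : ¬ Function.Injective v) :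
    ∑ σ : Perm ι, Perm.sign σ • g (v ∘ σ) = 0 := by
  obtain ⟨i, j, hvij, hij⟩ : ∃ i j, v i = v j ∧ i ≠ j := by
    simpa [Function.Injective] using hv
  -- Composing with the transposition `swap i j` fixes `v` and flips the sign.
  exact Finset.sum_involution (fun σ _ => swap i j * σ)
    (fun σ _ => by simp [Perm.sign_swap hij, Function.comp_def, apply_swap_eq_self hvij])
    (fun σ _ _ => (not_congr swap_mul_eq_iff).mpr hij) (fun σ _ => Finset.mem_univ _)
    fun σ _ => swap_mul_involutive i j σ

theorem pf_vanishes_in_low_dimension {m n : ℕ} (hm : m < 2 * n)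
    (E : OrthonormalBasis (Fin m) ℝ T)
    (R : T → T → T → T → ℝ) :
    pf E R n = 0 := by
  unfold pf
  refine mul_eq_zero_of_right _ ?_
  simp_rw [Finset.mul_sum]
  rw [Finset.sum_comm]
  refine Finset.sum_eq_zero fun μ _ => ?_
  have hμ : ¬ Function.Injective μ := fun h =>
    hm.not_ge (by simpa using Fintype.card_le_of_injective μ h)
  simpa [Units.smul_def, zsmul_eq_mul] using
    Equiv.Perm.sum_sign_smul_comp_eq_zero_of_not_injective (fun ν : Fin (2 * n) → Fin m =>
      ∏ r : Fin n, PhiPlus R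
          (E (μ ⟨2 * r.1, by have := r.isLt; omega⟩))
          (E (ν ⟨2 * r.1, by have := r.isLt; omega⟩))
          (E (μ ⟨2 * r.1 + 1, by have := r.isLt; omega⟩))
          (E (ν ⟨2 * r.1 + 1, by have := r.isLt; omega⟩))) hμ
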